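/- arXiv:2009.10540 — 2 statements merged into one kernel-verified Lean document; each statement's English description precedes it below -/
import Mathlib

section
/- Let X and Y be real normed spaces with Y finite-dimensional, and let f : X → Y. Then the following are equivalent: (a) there exist finitely many polyhedra P_1, …, P_m in X, continuous linear operators T_1, …, T_m : X → Y and points b_1, …, b_m ∈ Y such that X = ⋃_{i=1}^m P_i and f(x) = T_i x + b_i for all x ∈ P_i and all i; (b) the graph gph(f) = {(x, f(x)) : x ∈ X} is the union of finitely many polyhedra in the product normed space X × Y. -/
/-!
(a) ⇒ (b): over a polyhedron `P ⊆ X`, the graph of `x ↦ T x + b` is cut out of `X × Y` by the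
constraints of `P` together with the equation `y - T x = b`, which, `Y` being finite-dimensional,
amounts to finitely many pairs of opposite linear inequalities.

(b) ⇒ (a): a polyhedron `Λ ⊆ X × Y` lying in a graph is the graph of a continuous affine map over
its projection. Take a point of `Λ` satisfying strictly every constraint that is not an implicit
equality of `Λ`; it can be moved vertically in any direction `(0, v)` annihilated by the implicit
equalities without leaving `Λ`, so only `v = 0` is such a direction. Hence the implicit equalities
determine `y` from `x` through a continuous left inverse, and the affine map `x ↦ (x, T x + b)` pulls
`Λ` back to a polyhedron of `X` on which `f` equals `T x + b`.
-/

open Set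

/-- A polyhedron in a real normed space: a finite intersection of closed half-spaces. -/
def IsPolyhedron {Z : Type*} [NormedAddCommGroup Z] [NormedSpace ℝ Z] (P : Set Z) : Prop :=
  ∃ (n : ℕ) (u : Fin n → Z →L[ℝ] ℝ) (s : Fin n → ℝ), P = {z | ∀ i, u i z ≤ s i}

section Polyhedron

variable {Z W : Type*} [NormedAddCommGroup Z] [NormedSpace ℝ Z]
  [NormedAddCommGroup W] [NormedSpace ℝ W]

theorem IsPolyhedron.of_finite {ι : Type*} [Finite ι] (u : ι → Z →L[ℝ] ℝ) (s : ι → ℝ) :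
    IsPolyhedron {z | ∀ i, u i z ≤ s i} := by
  cases nonempty_fintype ι
  let e := (Fintype.equivFin ι).symm
  refine ⟨Fintype.card ι, u ∘ e, s ∘ e, ?_⟩
  ext z
  simpa using e.forall_congr_right.symm

theorem IsPolyhedron.convex {P : Set Z} (hP : IsPolyhedron P) : Convex ℝ P := by
  obtain ⟨n, u, s, rfl⟩ := hP
  rw [ofPred_forall]
  exact convex_iInter fun i => convex_halfSpace_le (u i).toLinearMap.isLinear (s i)

theorem IsPolyhedron.inter {P Q : Set Z} (hP : IsPolyhedron P) (hQ : IsPolyhedron Q) :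
    IsPolyhedron (P ∩ Q) := by
  obtain ⟨n, u, s, rfl⟩ := hP
  obtain ⟨m, v, t, rfl⟩ := hQ
  convert IsPolyhedron.of_finite (Sum.elim u v) (Sum.elim s t) using 1
  ext z
  simp [Sum.forall]

theorem IsPolyhedron.preimage {P : Set W} (hP : IsPolyhedron P) (L : Z →L[ℝ] W) :
    IsPolyhedron (L ⁻¹' P) := by
  obtain ⟨n, u, s, rfl⟩ := hP
  exact ⟨n, fun i => (u i).comp L, s, rfl⟩

theorem IsPolyhedron.preimage_add_const {P : Set Z} (hP : IsPolyhedron P) (c : Z) :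
    IsPolyhedron ((· + c) ⁻¹' P) := by
  obtain ⟨n, u, s, rfl⟩ := hP
  refine ⟨n, u, fun i => s i - u i c, ?_⟩
  ext z
  simp [le_sub_iff_add_le]

theorem isPolyhedron_singleton [FiniteDimensional ℝ Z] (z₀ : Z) : IsPolyhedron {z₀} := by
  let B := Module.finBasis ℝ Z
  let φ : Fin (Module.finrank ℝ Z) → Z →L[ℝ] ℝ := fun k => (B.coord k).toContinuousLinearMap
  convert (IsPolyhedron.of_finite φ (fun k => φ k z₀)).inter
    (IsPolyhedron.of_finite (fun k => -φ k) (fun k => -φ k z₀)) using 1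
  ext z
  simp only [mem_singleton_iff, mem_inter_iff, mem_ofPred_eq, neg_apply,
    neg_le_neg_iff, ← forall_and, ← le_antisymm_iff, ← sub_eq_zero (a := φ _ z), ← map_sub]
  exact (B.forall_coord_eq_zero_iff.trans sub_eq_zero).symm

end Polyhedron

theorem exists_mem_forall_lt_of_convexOn {E ι : Type*} [AddCommGroup E] [Module ℝ E] [Finite ι]
    {S : Set E} (hS : Convex ℝ S) (hne : S.Nonempty) {u : ι → E → ℝ} {t : ι → ℝ}
    (hu : ∀ j, ConvexOn ℝ S (u j)) (hle : ∀ j, ∀ w ∈ S, u j w ≤ t j) :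
    ∃ z ∈ S, ∀ j, (∃ w ∈ S, u j w < t j) → u j z < t j := by
  classical
  cases nonempty_fintype ι
  suffices ∀ J : Finset ι, ∃ z ∈ S, ∀ j ∈ J, (∃ w ∈ S, u j w < t j) → u j z < t j by
    simpa using this Finset.univ
  intro J
  induction J using Finset.induction_on with
  | empty => exact hne.imp fun z hz => ⟨hz, by simp⟩
  | insert a J _ ih =>
    obtain ⟨z, hz, hzJ⟩ := ih
    by_cases ha : ∃ w ∈ S, u a w < t a
    · obtain ⟨w, hw, hwa⟩ := ha
      have hmid : ∀ j, u j ((1 / 2 : ℝ) • z + (1 / 2 : ℝ) • w) ≤ 1 / 2 * u j z + 1 / 2 * u j w :=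
        fun j => (hu j).2 hz hw (by norm_num) (by norm_num) (by norm_num)
      refine ⟨(1 / 2 : ℝ) • z + (1 / 2 : ℝ) • w, hS hz hw (by norm_num) (by norm_num) (by norm_num), fun j hj hjw => ?_⟩
      rcases Finset.mem_insert.1 hj with rfl | hj
      · linarith [hmid j, hle j z hz]
      · linarith [hmid j, hzJ j hj hjw, hle j w hw]
    · refine ⟨z, hz, fun j hj hjw => ?_⟩
      rcases Finset.mem_insert.1 hj with rfl | hj
      · exact absurd hjw ha
      · exact hzJ j hj hjw

theorem exists_ne_zero_forall_add_smul_le {E ι : Type*} [NormedAddCommGroup E] [NormedSpace ℝ E]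
    [Finite ι] (u : ι → E →L[ℝ] ℝ) (s : ι → ℝ) {z d : E} (hz : ∀ j, u j z ≤ s j)
    (hd : ∀ j, u j z < s j ∨ u j d = 0) :
    ∃ ε ≠ (0 : ℝ), ∀ j, u j (z + ε • d) ≤ s j := by
  have hev : ∀ᶠ ε in nhds (0 : ℝ), ∀ j, u j (z + ε • d) ≤ s j := by
    refine Filter.eventually_all.2 fun j => ?_
    rcases hd j with hlt | hzero
    · have hcont : Continuous fun ε : ℝ => u j (z + ε • d) := by fun_prop
      exact (hcont.continuousAt.eventually_lt continuousAt_const (by simpa using hlt)).mono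
        fun _ => le_of_lt
    · exact Filter.Eventually.of_forall fun ε => by simpa [hzero] using hz j
  obtain ⟨ε, hε, hne⟩ := ((hev.filter_mono nhdsWithin_le_nhds).and
    (self_mem_nhdsWithin (s := {0}ᶜ) (a := (0 : ℝ)))).exists
  exact ⟨ε, hne, hε⟩

section Graph

variable {X Y : Type*} [NormedAddCommGroup X] [NormedSpace ℝ X]
  [NormedAddCommGroup Y] [NormedSpace ℝ Y]

theorem exists_snd_eq_of_injective_comp_inr {F : Type*} [NormedAddCommGroup F]
    [NormedSpace ℝ F] [FiniteDimensional ℝ F] (L : X × Y →L[ℝ] F)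
    (hL : Function.Injective (L.comp (ContinuousLinearMap.inr ℝ X Y))) :
    ∃ (T : X →L[ℝ] Y) (D : F →L[ℝ] Y), ∀ z : X × Y, z.2 = T z.1 + D (L z) := by
  obtain ⟨D, hD⟩ := ContinuousLinearMap.HasLeftInverse.of_injective_of_finiteDimensional hL
  refine ⟨-(D.comp (L.comp (ContinuousLinearMap.inl ℝ X Y))), D, fun z => ?_⟩
  have hsplit : L z = L (z.1, 0) + L (0, z.2) := by rw [← map_add]; simp
  have hinv : D (L (0, z.2)) = z.2 := hD z.2
  simp [hsplit, hinv]

theorem IsPolyhedron.exists_affine_of_injOn_fst {Λ : Set (X × Y)} (hΛ : IsPolyhedron Λ)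
    (hinj : InjOn Prod.fst Λ) :
    ∃ (T : X →L[ℝ] Y) (b : Y), ∀ z ∈ Λ, z.2 = T z.1 + b := by
  classical
  rcases Λ.eq_empty_or_nonempty with rfl | hne
  · exact ⟨0, 0, by simp⟩
  have hconv := hΛ.convex
  obtain ⟨n, u, s, hΛu⟩ := hΛ
  have hmem : ∀ z, z ∈ Λ ↔ ∀ j, u j z ≤ s j := fun z => by rw [hΛu]; rfl
  obtain ⟨zb, hzb, hzb_lt⟩ := exists_mem_forall_lt_of_convexOn hconv hne
    (fun j => (u j).toLinearMap.convexOn hconv) (fun j w hw => (hmem w).1 hw j)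
  let L : X × Y →L[ℝ] ({j // ∀ z ∈ Λ, u j z = s j} → ℝ) := ContinuousLinearMap.pi fun j => u j.1
  have hL : Function.Injective (L.comp (ContinuousLinearMap.inr ℝ X Y)) := by
    refine (injective_iff_map_eq_zero _).2 fun v hv => ?_
    have hdir : ∀ j, u j zb < s j ∨ u j (0, v) = 0 := by
      intro j
      by_cases hj : ∀ z ∈ Λ, u j z = s j
      · exact .inr (congrFun hv ⟨j, hj⟩)
      · obtain ⟨w, hw, hne⟩ := not_forall₂.1 hj
        exact .inl (hzb_lt j ⟨w, hw, ((hmem w).1 hw j).lt_of_ne hne⟩)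
    obtain ⟨ε, hε, hmoved⟩ := exists_ne_zero_forall_add_smul_le u s ((hmem zb).1 hzb) hdir
    simpa [hε] using hinj ((hmem _).2 hmoved) hzb (by simp)
  obtain ⟨T, D, hTD⟩ := exists_snd_eq_of_injective_comp_inr L hL
  refine ⟨T, D fun j => s j.1, fun z hz => ?_⟩
  rw [hTD z, show L z = fun j => s j.1 from funext fun j => j.2 z hz]

theorem IsPolyhedron.graphOn_affine [FiniteDimensional ℝ Y] {P : Set X} (hP : IsPolyhedron P)
    (T : X →L[ℝ] Y) (b : Y) : IsPolyhedron (P.graphOn fun x => T x + b) := by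
  convert (hP.preimage (ContinuousLinearMap.fst ℝ X Y)).inter ((isPolyhedron_singleton b).preimage
    (ContinuousLinearMap.snd ℝ X Y - T.comp (ContinuousLinearMap.fst ℝ X Y))) using 1
  ext ⟨x, y⟩
  simp [eq_sub_iff_add_eq', eq_comm]

theorem IsPolyhedron.preimage_graph {Λ : Set (X × Y)} (hΛ : IsPolyhedron Λ) (T : X →L[ℝ] Y)
    (b : Y) : IsPolyhedron {x | (x, T x + b) ∈ Λ} := by
  convert (hΛ.preimage_add_const (0, b)).preimage ((ContinuousLinearMap.id ℝ X).prod T) using 1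
  ext x
  simp

end Graph

theorem range_eq_iUnion_graphOn {α β ι : Type*} {f : α → β} {P : ι → Set α} {g : ι → α → β}
    (hcov : ⋃ i, P i = univ) (hf : ∀ i, EqOn f (g i) (P i)) :
    range (fun x => (x, f x)) = ⋃ i, (P i).graphOn (g i) := by
  rw [← graphOn_univ_eq_range, ← hcov, graphOn, image_iUnion]
  exact iUnion_congr fun i => graphOn_inj.2 (hf i)

/-- For `Y` finite-dimensional, `f : X → Y` is piecewise linear (affine on
each member of a finite polyhedral cover of `X`) iff its graph is a finite union of
polyhedra in `X × Y`. -/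
theorem stmt_11 {X Y : Type*} [NormedAddCommGroup X] [NormedSpace ℝ X]
    [NormedAddCommGroup Y] [NormedSpace ℝ Y] [FiniteDimensional ℝ Y]
    (f : X → Y) :
    (∃ (m : ℕ) (P : Fin m → Set X) (T : Fin m → X →L[ℝ] Y) (b : Fin m → Y),
        (∀ i, IsPolyhedron (P i)) ∧ (⋃ i, P i) = Set.univ ∧
        ∀ i, ∀ x ∈ P i, f x = T i x + b i) ↔
    (∃ (k : ℕ) (Λ : Fin k → Set (X × Y)),
        (∀ i, IsPolyhedron (Λ i)) ∧
        Set.range (fun x => (x, f x)) = ⋃ i, Λ i) := by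
  constructor
  · rintro ⟨m, P, T, b, hP, hcov, hf⟩
    exact ⟨m, fun i => (P i).graphOn fun x => T i x + b i,
      fun i => (hP i).graphOn_affine (T i) (b i), range_eq_iUnion_graphOn hcov hf⟩
  · rintro ⟨k, Λ, hΛ, hgraph⟩
    have hsub : ∀ i, Λ i ⊆ univ.graphOn f := fun i => by
      rw [graphOn_univ_eq_range, hgraph]
      exact subset_iUnion Λ i
    choose T b hTb using fun i =>
      (hΛ i).exists_affine_of_injOn_fst (fst_injOn_graph.mono (hsub i))
    refine ⟨k, fun i => {x | (x, T i x + b i) ∈ Λ i}, T, b,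
      fun i => (hΛ i).preimage_graph (T i) (b i), eq_univ_of_forall fun x => ?_,
      fun i x hx => (mem_graphOn.1 (hsub i hx)).2⟩
    obtain ⟨i, hi⟩ := mem_iUnion.1 (hgraph ▸ mem_range_self x : (x, f x) ∈ ⋃ i, Λ i)
    have hfx : f x = T i x + b i := hTb i _ hi
    exact mem_iUnion.2 ⟨i, show (x, T i x + b i) ∈ Λ i from hfx ▸ hi⟩
end

section
/- Let X and Y be real normed spaces and let f : X → Y be piecewise linear, i.e. there exist finitely many polyhedra covering X on each of which f is affine with continuous linear part. Then there exist polyhedra P_1, …, P_m in X, continuous linear operators T_1, …, T_m : X → Y and points b_1, …, b_m ∈ Y such that X = ⋃_{i=1}^m P_i, int(P_i) ≠ ∅ for every i, P_i ∩ int(P_j) = ∅ for all i ≠ j, and f(x) = T_i x + b_i for all x ∈ P_i and each i = 1,…,m. -/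
/-!
Cut `X` by all the hyperplanes `u = s` bounding the pieces `Q j` (a constraint with `u = 0`
holds everywhere or nowhere, so it is dropped) and take the cells of this arrangement,
one for each choice of a side of every hyperplane, that have nonempty interior. At an interior
point of a cell every defining inequality is strict, so distinct cells do not meet each other's
interiors, and a cell whose interior meets `Q j` lies in `Q j`, where `f` is affine. Every `x`
lies in such a cell: for a direction `v` on which no functional vanishes and small `t > 0`, the
point `x + t • v` lies on no hyperplane and on the same side as `x` of each hyperplane not
through `x`, so the side pattern of `x + t • v` defines a cell containing `x` with `x + t • v`
in its interior.
-/

open Set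

/-- `f` is piecewise linear: finitely many polyhedra cover `X` and on each of them `f`
is affine with continuous linear part. -/
def IsPLMap {X Y : Type*} [NormedAddCommGroup X] [NormedSpace ℝ X]
    [NormedAddCommGroup Y] [NormedSpace ℝ Y] (f : X → Y) : Prop :=
  ∃ (k : ℕ) (Q : Fin k → Set X) (S : Fin k → X →L[ℝ] Y) (c : Fin k → Y),
    (∀ j, IsPolyhedron (Q j)) ∧ (⋃ j, Q j) = Set.univ ∧
    ∀ j, ∀ x ∈ Q j, f x = S j x + c j

open Filter Topology

section Halfspaces

variable {X : Type*} [NormedAddCommGroup X] [NormedSpace ℝ X] {ι : Type*}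

theorem isPolyhedron_setOf_forall_le [Finite ι] (u : ι → X →L[ℝ] ℝ) (s : ι → ℝ) :
    IsPolyhedron {z | ∀ i, u i z ≤ s i} := by
  obtain ⟨n, ⟨e⟩⟩ := Finite.exists_equiv_fin ι
  exact ⟨n, u ∘ e.symm, s ∘ e.symm, by ext z; simp [e.symm.forall_congr_left]⟩

theorem interior_setOf_le_of_ne_zero {u : X →L[ℝ] ℝ} (hu : u ≠ 0) (s : ℝ) :
    interior {z | u z ≤ s} = {z | u z < s} := by
  have hopen : IsOpenMap u :=
    (u : X →ₗ[ℝ] ℝ).isOpenMap_of_finiteDimensional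
      (LinearMap.surjective_iff_ne_zero.2 fun h => hu (ContinuousLinearMap.coe_injective h))
  exact (hopen.preimage_interior_eq_interior_preimage u.continuous (Iic s)).symm.trans
    (by rw [interior_Iic]; rfl)

theorem interior_setOf_forall_le [Finite ι] {u : ι → X →L[ℝ] ℝ} (hu : ∀ i, u i ≠ 0)
    (s : ι → ℝ) : interior {z | ∀ i, u i z ≤ s i} = {z | ∀ i, u i z < s i} := by
  simp [ofPred_forall, interior_setOf_le_of_ne_zero (hu _)]

end Halfspaces

theorem eventually_add_mul_ne_zero_and_mul_nonneg (a : ℝ) {b : ℝ} (hb : b ≠ 0) :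
    ∀ᶠ t in 𝓝[>] 0, a + t * b ≠ 0 ∧ 0 ≤ a * (a + t * b) := by
  rcases eq_or_ne a 0 with rfl | ha
  · filter_upwards [self_mem_nhdsWithin] with t (ht : 0 < t)
    simp [ht.ne', hb]
  · have hlim : Tendsto (fun t : ℝ => a * (a + t * b)) (𝓝[>] 0) (𝓝 (a * a)) := by
      apply tendsto_nhdsWithin_of_tendsto_nhds
      simpa using ((continuous_const.add (continuous_id.mul continuous_const)).const_mul a).tendsto
        (0 : ℝ)
    filter_upwards [hlim.eventually_const_lt (mul_self_pos.2 ha)] with t ht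
    exact ⟨fun h => by simp [h] at ht, ht.le⟩

section SignCell

variable {X : Type*} [NormedAddCommGroup X] [NormedSpace ℝ X] {ι : Type*}
  (L : ι → X →L[ℝ] ℝ) (r : ι → ℝ)

def signCell (ε : ι → Bool) : Set X :=
  {z | ∀ i, (bif ε i then L i else -L i) z ≤ bif ε i then r i else -r i}

theorem isPolyhedron_signCell [Finite ι] (ε : ι → Bool) : IsPolyhedron (signCell L r ε) :=
  isPolyhedron_setOf_forall_le _ _

variable {L}

theorem interior_signCell [Finite ι] (hL : ∀ i, L i ≠ 0) (ε : ι → Bool) :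
    interior (signCell L r ε) =
      {z | ∀ i, (bif ε i then L i else -L i) z < bif ε i then r i else -r i} :=
  interior_setOf_forall_le (fun i => by cases ε i <;> simp [hL i]) _

theorem exists_mem_signCell_interior_nonempty [Finite ι] (hL : ∀ i, L i ≠ 0) (x : X) :
    ∃ ε, x ∈ signCell L r ε ∧ (interior (signCell L r ε)).Nonempty := by
  obtain ⟨v, hv⟩ : ∃ v, ∀ i, L i v ≠ 0 := Module.Dual.exists_forall_ne_zero_of_forall_exists
    (fun i => (L i : X →ₗ[ℝ] ℝ)) fun i => DFunLike.ne_iff.1 (hL i)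
  obtain ⟨t, ht⟩ := (eventually_all.2 fun i =>
    eventually_add_mul_ne_zero_and_mul_nonneg (L i x - r i) (hv i)).exists
  obtain ⟨y, hy⟩ : ∃ y, ∀ i, L i y - r i = L i x - r i + t * L i v :=
    ⟨x + t • v, fun i => by simp only [map_add, map_smul, smul_eq_mul]; ring⟩
  have hy_ne : ∀ i, L i y < r i ∨ r i < L i y := fun i => by
    have hne := (ht i).1
    rw [← hy, sub_ne_zero] at hne
    exact hne.lt_or_gt
  refine ⟨fun i => decide (L i y < r i), fun i => ?_, y, ?_⟩
  · have hsame := (ht i).2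
    rw [← hy] at hsame
    rcases hy_ne i with h | h <;> simp [h, not_lt_of_gt h] <;> nlinarith
  · rw [interior_signCell r hL]
    intro i
    rcases hy_ne i with h | h <;> simp [h, not_lt_of_gt h]

theorem signCell_inter_interior_eq_empty [Finite ι] (hL : ∀ i, L i ≠ 0) {ε ε' : ι → Bool}
    (h : ε ≠ ε') : signCell L r ε ∩ interior (signCell L r ε') = ∅ := by
  obtain ⟨i, hi⟩ := Function.ne_iff.1 h
  refine eq_empty_iff_forall_notMem.2 fun z ⟨hz, hz'⟩ => ?_
  rw [interior_signCell r hL] at hz'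
  have hz_le := hz i
  have hz_lt := hz' i
  cases hε : ε i <;> cases hε' : ε' i <;> simp [hε, hε'] at hi hz_le hz_lt <;> linarith

theorem signCell_subset_of_mem_interior [Finite ι] (hL : ∀ i, L i ≠ 0) {κ : Type*}
    {u : κ → X →L[ℝ] ℝ} {s : κ → ℝ} (hus : ∀ a, u a ≠ 0 → ∃ i, L i = u a ∧ r i = s a)
    {ε : ι → Bool} {z : X} (hz : z ∈ interior (signCell L r ε)) (hzu : ∀ a, u a z ≤ s a) :
    signCell L r ε ⊆ {w | ∀ a, u a w ≤ s a} := by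
  intro w hw a
  rcases eq_or_ne (u a) 0 with h0 | h0
  · simpa [h0] using hzu a
  obtain ⟨i, hLi, hri⟩ := hus a h0
  have hz_le := hzu a
  rw [← hLi, ← hri] at hz_le ⊢
  rw [interior_signCell r hL] at hz
  have hz_lt := hz i
  have hw_le := hw i
  cases hε : ε i <;> simp [hε] at hz_lt hw_le <;> linarith

end SignCell

/-- Every piecewise linear function admits a representation by polyhedra
with nonempty interiors whose interiors do not meet the other pieces. -/
theorem stmt_12 {X Y : Type*} [NormedAddCommGroup X] [NormedSpace ℝ X]
    [NormedAddCommGroup Y] [NormedSpace ℝ Y]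
    (f : X → Y) (hf : IsPLMap f) :
    ∃ (m : ℕ) (P : Fin m → Set X) (T : Fin m → X →L[ℝ] Y) (b : Fin m → Y),
      (∀ i, IsPolyhedron (P i)) ∧ (⋃ i, P i) = Set.univ ∧
      (∀ i, (interior (P i)).Nonempty) ∧
      (∀ i j, i ≠ j → P i ∩ interior (P j) = ∅) ∧
      ∀ i, ∀ x ∈ P i, f x = T i x + b i := by
  obtain ⟨k, Q, S, c, hQpoly, hQcover, hfQ⟩ := hf
  choose n u s hQ using hQpoly
  let ι := {p : (j : Fin k) × Fin (n j) // u p.1 p.2 ≠ 0}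
  let L : ι → X →L[ℝ] ℝ := fun p => u p.1.1 p.1.2
  let r : ι → ℝ := fun p => s p.1.1 p.1.2
  have hL : ∀ i, L i ≠ 0 := fun p => p.2
  obtain ⟨m, ⟨e⟩⟩ :=
    Finite.exists_equiv_fin {ε : ι → Bool // (interior (signCell L r ε)).Nonempty}
  have hQ_of_cell : ∀ ε : {ε : ι → Bool // (interior (signCell L r ε)).Nonempty},
      ∃ j, signCell L r ε.1 ⊆ Q j := by
    rintro ⟨ε, z, hz⟩
    obtain ⟨j, hzj⟩ := mem_iUnion.1 (hQcover ▸ mem_univ z)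
    rw [hQ j] at hzj
    exact ⟨j, hQ j ▸ signCell_subset_of_mem_interior r hL
      (fun a ha => ⟨⟨⟨j, a⟩, ha⟩, rfl, rfl⟩) hz hzj⟩
  choose J hJ using hQ_of_cell
  refine ⟨m, fun i => signCell L r (e.symm i).1, fun i => S (J (e.symm i)),
    fun i => c (J (e.symm i)), fun i => isPolyhedron_signCell L r _, ?_, fun i => (e.symm i).2,
    fun i j hij => signCell_inter_interior_eq_empty r hL ?_,
    fun i x hx => hfQ _ x (hJ _ hx)⟩
  · refine eq_univ_of_forall fun x => ?_
    obtain ⟨ε, hx, hε⟩ := exists_mem_signCell_interior_nonempty r hL x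
    exact mem_iUnion.2 ⟨e ⟨ε, hε⟩, by simpa using hx⟩
  · exact fun h => hij (e.symm.injective (Subtype.ext h))
end
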